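/- Let X be a geodesic metric space, let Γ be a group with finite generating set S equipped with the word metric d_S, and suppose X is quasi-isometric to (Γ, d_S). Then there exists a function f₁ : [0,∞) → [0,∞) such that every bounded subset Ω ⊆ X satisfies diam(Ω) ≤ f₁(diam(∂Ω)), where ∂Ω denotes the topological frontier of Ω in X (the closure of Ω minus the interior of Ω), and the diameter of the empty set is taken to be 0. -/

import Mathlib

/-!
In a finitely generated group, for every radius `ρ` there is an `N` such that every element
farther than `N` from a base point is joined to elements arbitrarily far out by a chain of steps
of word length one avoiding the `ρ`-ball. Otherwise there are elements `g n` arbitrarily far out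
from which such chains reach only a bounded region; each `g n` is chained to a point of the
finite sphere of radius `ρ + 1`, so some `g m` and `g n` are chained to the same point and hence
to each other, although `g n` lies beyond the region reachable from `g m`.

Transport this to `X` through a quasi-inverse `g : Γ → X`, with `p` chosen so that
`∂Ω ⊆ closedBall p r`. A step of length at most `δ` starting farther than `r + δ` from `p`
cannot leave `Ω`, since the geodesic segment it spans would meet `∂Ω`. So a point of `Ω` far
from `p` would start a chain that stays in `Ω` and ends arbitrarily far out, contradicting the
boundedness of `Ω`.
-/

/-- A metric space is geodesic if any two points are joined by an isometrically
embedded segment. -/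
def IsGeodesicSpace (X : Type*) [MetricSpace X] : Prop :=
  ∀ x y : X, ∃ γ : ℝ → X, γ 0 = x ∧ γ (dist x y) = y ∧
    ∀ s ∈ Set.Icc (0 : ℝ) (dist x y), ∀ t ∈ Set.Icc (0 : ℝ) (dist x y),
      dist (γ s) (γ t) = |s - t|

/-- The word metric on a group `Γ` relative to a generating set `S`:
`wordDist S g h` is the least `n` such that `g⁻¹ * h` is a product of `n`
elements of `S ∪ S⁻¹`. -/
noncomputable def wordDist {Γ : Type*} [Group Γ] (S : Set Γ) (g h : Γ) : ℕ :=
  sInf {n : ℕ | ∃ l : List Γ, l.length = n ∧ (∀ a ∈ l, a ∈ S ∨ a⁻¹ ∈ S) ∧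
    l.prod = g⁻¹ * h}

open Bornology Metric Set

section WordDist

variable {Γ : Type*} [Group Γ] {S : Set Γ}

lemma wordDist_le_length {g h : Γ} {l : List Γ} (hl : ∀ a ∈ l, a ∈ S ∨ a⁻¹ ∈ S)
    (hp : l.prod = g⁻¹ * h) : wordDist S g h ≤ l.length :=
  Nat.sInf_le ⟨l, rfl, hl, hp⟩

lemma exists_list_length_eq_wordDist (hgen : Subgroup.closure S = ⊤) (g h : Γ) :
    ∃ l : List Γ, l.length = wordDist S g h ∧ (∀ a ∈ l, a ∈ S ∨ a⁻¹ ∈ S) ∧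
      l.prod = g⁻¹ * h := by
  have hmem : g⁻¹ * h ∈ (Subgroup.closure S).toSubmonoid := by simp [hgen]
  rw [Subgroup.closure_toSubmonoid] at hmem
  obtain ⟨l, hl, hp⟩ := Submonoid.exists_list_of_mem_closure hmem
  exact Nat.sInf_mem (s := {n | ∃ l : List Γ, l.length = n ∧
    (∀ a ∈ l, a ∈ S ∨ a⁻¹ ∈ S) ∧ l.prod = g⁻¹ * h}) ⟨l.length, l, rfl, hl, hp⟩

lemma wordDist_comm (g h : Γ) : wordDist S g h = wordDist S h g := by
  simp only [wordDist]
  congr 1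
  ext n
  constructor <;> rintro ⟨l, rfl, hl, hp⟩ <;>
    exact ⟨(l.map (·⁻¹)).reverse, by simp,
      fun c hc => by simpa [or_comm] using hl c⁻¹ (by simpa using hc),
      by rw [← List.prod_inv_reverse, hp]; group⟩

lemma wordDist_triangle (hgen : Subgroup.closure S = ⊤) (g h k : Γ) :
    wordDist S g k ≤ wordDist S g h + wordDist S h k := by
  obtain ⟨l₁, hlen₁, hl₁, hp₁⟩ := exists_list_length_eq_wordDist hgen g h
  obtain ⟨l₂, hlen₂, hl₂, hp₂⟩ := exists_list_length_eq_wordDist hgen h k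
  have hl : ∀ a ∈ l₁ ++ l₂, a ∈ S ∨ a⁻¹ ∈ S := by
    simpa [or_imp, forall_and] using ⟨hl₁, hl₂⟩
  have hp : (l₁ ++ l₂).prod = g⁻¹ * k := by
    rw [List.prod_append, hp₁, hp₂]; group
  simpa [hlen₁, hlen₂] using wordDist_le_length hl hp

lemma wordDist_mul_left (o g h : Γ) : wordDist S (o * g) (o * h) = wordDist S g h := by
  simp only [wordDist, mul_inv_rev, mul_assoc, inv_mul_cancel_left]

lemma finite_setOf_wordDist_le (hfin : S.Finite) (hgen : Subgroup.closure S = ⊤) (o : Γ)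
    (n : ℕ) : {g : Γ | wordDist S o g ≤ n}.Finite := by
  have := (hfin.union hfin.inv).to_subtype
  refine ((List.finite_length_le ↥(S ∪ S⁻¹) n).image
    fun l => o * (l.map (↑)).prod).subset fun g hg => ?_
  obtain ⟨l, hlen, hl, hp⟩ := exists_list_length_eq_wordDist hgen o g
  lift l to List ↥(S ∪ S⁻¹) using hl
  rw [mem_ofPred, ← hlen, List.length_map] at hg
  refine ⟨l, hg, ?_⟩
  simp only [hp, mul_inv_cancel_left]

lemma exists_wordDist_eq_of_wordDist_eq_succ (hgen : Subgroup.closure S = ⊤) {o g : Γ} {n : ℕ}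
    (hg : wordDist S o g = n + 1) : ∃ g', wordDist S o g' = n ∧ wordDist S g' g ≤ 1 := by
  obtain ⟨l, hlen, hl, hp⟩ := exists_list_length_eq_wordDist hgen o g
  obtain ⟨l, b, rfl⟩ :=
    (List.eq_nil_or_concat' l).resolve_left (by rintro rfl; simp at hlen; omega)
  rw [List.prod_append, List.prod_singleton] at hp
  have hn : l.length = n := by simp only [List.length_append, List.length_singleton] at hlen; omega
  have h₁ : wordDist S o (o * l.prod) ≤ n := by
    simpa [hn] using wordDist_le_length (l := l) (fun a ha => hl a (by simp [ha]))
      (g := o) (h := o * l.prod) (by group)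
  have h₂ : wordDist S (o * l.prod) g ≤ 1 := by
    simpa using wordDist_le_length (l := [b]) (by simpa using hl b (by simp))
      (by rw [List.prod_singleton, eq_inv_mul_iff_mul_eq, mul_assoc, hp, mul_inv_cancel_left])
  have := wordDist_triangle hgen o (o * l.prod) g
  exact ⟨o * l.prod, by omega, h₂⟩

lemma wordDist_self_mul (o g : Γ) : wordDist S o (o * g) = wordDist S 1 g := by
  rw [← wordDist_mul_left o 1 g, mul_one]

def StepOutsideBall (S : Set Γ) (o : Γ) (ρ : ℕ) (a b : Γ) : Prop :=
  wordDist S a b ≤ 1 ∧ ρ < wordDist S o a ∧ ρ < wordDist S o b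

instance {o : Γ} {ρ : ℕ} : Std.Symm (StepOutsideBall S o ρ) :=
  ⟨fun _ _ ⟨h, ha, hb⟩ => ⟨(wordDist_comm _ _).trans_le h, hb, ha⟩⟩

lemma StepOutsideBall.mul_left {a b : Γ} {ρ : ℕ} (h : StepOutsideBall S 1 ρ a b) (o : Γ) :
    StepOutsideBall S o ρ (o * a) (o * b) := by
  simpa only [StepOutsideBall, wordDist_mul_left, wordDist_self_mul] using h

lemma exists_reflTransGen_stepOutsideBall_of_lt (hgen : Subgroup.closure S = ⊤) {o g : Γ}
    {ρ : ℕ} (hg : ρ < wordDist S o g) :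
    ∃ h, wordDist S o h = ρ + 1 ∧ Relation.ReflTransGen (StepOutsideBall S o ρ) h g := by
  obtain ⟨k, hk⟩ := Nat.exists_eq_add_of_lt hg
  induction k generalizing g with
  | zero => exact ⟨g, hk, .refl⟩
  | succ k ih =>
    obtain ⟨g', hg', hstep⟩ := exists_wordDist_eq_of_wordDist_eq_succ hgen hk
    obtain ⟨h, hh, hhg'⟩ := ih (by omega) hg'
    exact ⟨h, hh, hhg'.tail ⟨hstep, by omega, by omega⟩⟩

lemma exists_radius_reflTransGen_unbounded (hfin : S.Finite) (hgen : Subgroup.closure S = ⊤)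
    (o : Γ) (ρ : ℕ) : ∃ N, ρ < N ∧ ∀ g, N < wordDist S o g → ∀ R : ℕ,
      ∃ h, Relation.ReflTransGen (StepOutsideBall S o ρ) g h ∧ R ≤ wordDist S o h := by
  by_contra! hcon
  choose g hg R hR using fun n : ℕ => hcon (ρ + n + 1) (by omega)
  choose h hh hhg using fun n =>
    exists_reflTransGen_stepOutsideBall_of_lt hgen (by have := hg n; omega : ρ < wordDist S o (g n))
  have := (finite_setOf_wordDist_le hfin hgen o (ρ + 1)).to_subtype
  obtain ⟨c, hc⟩ := Finite.exists_infinite_fiber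
    fun n => (⟨h n, (hh n).le⟩ : {x | wordDist S o x ≤ ρ + 1})
  have hc := Set.infinite_coe_iff.mp hc
  obtain ⟨m, hm, -⟩ := hc.exists_gt 0
  obtain ⟨n, hn, hmn⟩ := hc.exists_gt (R m)
  have hhmn : h m = h n := congrArg Subtype.val (hm.trans hn.symm)
  have hgmn := (Std.Symm.symm _ _ (hhg m)).trans (hhmn ▸ hhg n)
  have := hR m (g n) hgmn
  have := hg n
  omega

theorem exists_radius_forall_reflTransGen_unbounded (hfin : S.Finite)
    (hgen : Subgroup.closure S = ⊤) (ρ : ℕ) :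
    ∃ N, ρ < N ∧ ∀ o g, N < wordDist S o g → ∀ R : ℕ,
      ∃ h, Relation.ReflTransGen (StepOutsideBall S o ρ) g h ∧ R ≤ wordDist S o h := by
  obtain ⟨N, hρN, hN⟩ := exists_radius_reflTransGen_unbounded hfin hgen 1 ρ
  refine ⟨N, hρN, fun o g hg R => ?_⟩
  obtain ⟨h, hgh, hR⟩ :=
    hN (o⁻¹ * g) (by rwa [← wordDist_self_mul o, mul_inv_cancel_left]) R
  refine ⟨o * h, ?_, by rwa [wordDist_self_mul]⟩
  simpa [Function.onFun] using hgh.lift (o * ·) fun a b hab => hab.mul_left o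

end WordDist

section Geodesic

variable {X : Type*} [MetricSpace X]

lemma IsGeodesicSpace.exists_mem_frontier_dist_le (hgeo : IsGeodesicSpace X) {Ω : Set X}
    {x y : X} (hx : x ∈ Ω) (hy : y ∉ Ω) : ∃ z ∈ frontier Ω, dist x z ≤ dist x y := by
  obtain ⟨γ, hγ0, hγ1, hγ⟩ := hgeo x y
  have hd : (0 : ℝ) ≤ dist x y := dist_nonneg
  let seg : Icc 0 (dist x y) → X := fun t => γ t
  have hseg : Isometry seg :=
    Isometry.of_dist_eq fun s t => by simp [seg, hγ s s.2 t t.2, Subtype.dist_eq, Real.dist_eq]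
  have := Subtype.preconnectedSpace (isPreconnected_Icc (a := 0) (b := dist x y))
  obtain ⟨t, ht⟩ : (frontier (seg ⁻¹' Ω)).Nonempty :=
    nonempty_frontier_iff.mpr ⟨⟨⟨0, le_rfl, hd⟩, by simpa [seg, hγ0]⟩,
      fun h => hy <| by
        simpa [seg, hγ1] using eq_univ_iff_forall.mp h ⟨dist x y, hd, le_rfl⟩⟩
  refine ⟨γ t, hseg.continuous.frontier_preimage_subset Ω ht, ?_⟩
  have hxt := hγ 0 ⟨le_rfl, hd⟩ t t.2
  rw [hγ0, zero_sub, abs_neg, abs_of_nonneg t.2.1] at hxt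
  exact hxt.trans_le t.2.2

lemma IsGeodesicSpace.mem_of_reflTransGen (hgeo : IsGeodesicSpace X) {Ω : Set X} {p : X}
    {r δ : ℝ} (hΩ : frontier Ω ⊆ closedBall p r) {x y : X}
    (hxy : Relation.ReflTransGen (fun a b => dist a b ≤ δ ∧ r + δ < dist a p) x y)
    (hx : x ∈ Ω) : y ∈ Ω := by
  induction hxy with
  | refl => exact hx
  | @tail b c _ hbc ih =>
    by_contra hc
    obtain ⟨z, hz, hbz⟩ := hgeo.exists_mem_frontier_dist_le ih hc
    linarith [mem_closedBall.mp (hΩ hz), dist_triangle b z p, hbc.1, hbc.2]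

end Geodesic

lemma Bornology.IsBounded.exists_subset_closedBall_diam {X : Type*} [PseudoMetricSpace X]
    [Nonempty X] {A : Set X} (hA : IsBounded A) : ∃ p, A ⊆ closedBall p (diam A) := by
  rcases A.eq_empty_or_nonempty with rfl | ⟨p, hp⟩
  · exact ⟨Classical.arbitrary X, empty_subset _⟩
  · exact ⟨p, fun y hy => mem_closedBall.mpr (dist_le_diam_of_mem hA hy hp)⟩

section QuasiIsometry

variable {X : Type*} [MetricSpace X] {Γ : Type*} [Group Γ] {S : Set Γ}

structure IsQuasiIsometryWith (S : Set Γ) (K : ℝ) (g : Γ → X) : Prop where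
  dist_le : ∀ a b, dist (g a) (g b) ≤ K * (wordDist S a b + 1)
  wordDist_le : ∀ a b, (wordDist S a b : ℝ) ≤ K * (dist (g a) (g b) + 1)
  exists_dist_le : ∀ x, ∃ a, dist x (g a) ≤ K

lemma exists_isQuasiIsometryWith (hgen : Subgroup.closure S = ⊤) {f : X → Γ} {lam C : ℝ}
    (hlam : 1 ≤ lam) (hC : 0 ≤ C)
    (hf : ∀ x x' : X, lam⁻¹ * dist x x' - C ≤ (wordDist S (f x) (f x') : ℝ) ∧
      (wordDist S (f x) (f x') : ℝ) ≤ lam * dist x x' + C)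
    (hsurj : ∀ g : Γ, ∃ x : X, (wordDist S (f x) g : ℝ) ≤ C) :
    ∃ (K : ℝ) (g : Γ → X), IsQuasiIsometryWith S K g := by
  choose g hg using hsurj
  have hg' : ∀ a, (wordDist S a (f (g a)) : ℝ) ≤ C :=
    fun a => wordDist_comm (S := S) a _ ▸ hg a
  have hdist : ∀ x x', dist x x' ≤ lam * (wordDist S (f x) (f x') + C) := fun x x' => by
    have := (hf x x').1
    calc dist x x' = lam * (lam⁻¹ * dist x x') := by field_simp
      _ ≤ _ := by gcongr; linarith
  have htri : ∀ a b c : Γ, (wordDist S a c : ℝ) ≤ wordDist S a b + wordDist S b c :=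
    fun a b c => by exact_mod_cast wordDist_triangle hgen a b c
  refine ⟨lam * (1 + 3 * C), g, ⟨fun a b => ?_, fun a b => ?_, fun x => ⟨f x, ?_⟩⟩⟩
  · have h₁ := htri (f (g a)) a (f (g b))
    have h₂ := htri a b (f (g b))
    have hw : 0 ≤ (wordDist S a b : ℝ) := Nat.cast_nonneg _
    calc dist (g a) (g b) ≤ lam * (wordDist S (f (g a)) (f (g b)) + C) := hdist _ _
      _ ≤ lam * (wordDist S a b + 3 * C) :=
        mul_le_mul_of_nonneg_left (by linarith [hg a, hg' b]) (by linarith)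
      _ ≤ lam * (1 + 3 * C) * (wordDist S a b + 1) := by
        rw [mul_assoc]; gcongr; nlinarith
  · have h₁ := htri a (f (g a)) b
    have h₂ := htri (f (g a)) (f (g b)) b
    have hd : 0 ≤ dist (g a) (g b) := dist_nonneg
    calc (wordDist S a b : ℝ) ≤ wordDist S (f (g a)) (f (g b)) + 2 * C := by
          linarith [hg b, hg' a]
      _ ≤ lam * dist (g a) (g b) + 3 * C := by linarith [(hf (g a) (g b)).2]
      _ ≤ lam * (1 + 3 * C) * (dist (g a) (g b) + 1) := by
        nlinarith [mul_nonneg (mul_nonneg (by linarith : 0 ≤ lam) hC) hd,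
          mul_le_mul_of_nonneg_right hlam hC]
  · calc dist x (g (f x)) ≤ lam * (wordDist S (f x) (f (g (f x))) + C) := hdist _ _
      _ ≤ lam * (1 + 3 * C) :=
        mul_le_mul_of_nonneg_left (by linarith [hg' (f x)]) (by linarith)

namespace IsQuasiIsometryWith

variable {K : ℝ} {g : Γ → X}

lemma nonneg (hg : IsQuasiIsometryWith S K g) : 0 ≤ K :=
  have ⟨_, ha⟩ := hg.exists_dist_le (g 1)
  dist_nonneg.trans ha

lemma lt_dist_of_lt_wordDist (hg : IsQuasiIsometryWith S K g) {p : X} {a b : Γ}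
    (ha : dist (g a) p ≤ K) {s : ℝ} (h : K * (s + K + 1) < wordDist S a b) :
    s < dist (g b) p := by
  have hab : (wordDist S a b : ℝ) ≤ K * (dist (g b) p + K + 1) :=
    (hg.wordDist_le a b).trans <| mul_le_mul_of_nonneg_left
      (by linarith [dist_triangle_right (g a) (g b) p]) hg.nonneg
  linarith [lt_of_mul_lt_mul_left (h.trans_le hab) hg.nonneg]

theorem exists_dist_le_of_frontier_subset_closedBall (hg : IsQuasiIsometryWith S K g)
    (hgeo : IsGeodesicSpace X) (hfin : S.Finite) (hgen : Subgroup.closure S = ⊤) (r : ℝ) :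
    ∃ B, 0 ≤ B ∧ ∀ (Ω : Set X) (p : X), IsBounded Ω → frontier Ω ⊆ closedBall p r →
      ∀ x ∈ Ω, dist x p ≤ B := by
  have hK := hg.nonneg
  obtain ⟨N, hρN, hN⟩ :=
    exists_radius_forall_reflTransGen_unbounded hfin hgen ⌈K * (r + 4 * K + 1)⌉₊
  refine ⟨K * (N + 3), by positivity, fun Ω p hΩ hfr x hx => ?_⟩
  obtain ⟨a₀, ha₀⟩ := hg.exists_dist_le p
  obtain ⟨a, ha⟩ := hg.exists_dist_le x
  rw [dist_comm] at ha₀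
  have far : ∀ b, ⌈K * (r + 4 * K + 1)⌉₊ < wordDist S a₀ b → r + 3 * K < dist (g b) p :=
    fun b hb => hg.lt_dist_of_lt_wordDist ha₀ (by linarith [Nat.lt_of_ceil_lt hb])
  suffices hN' : wordDist S a₀ a ≤ N by
    have h₁ : dist (g a₀) (g a) ≤ K * (N + 1) :=
      (hg.dist_le a₀ a).trans (mul_le_mul_of_nonneg_left (by exact_mod_cast by omega) hK)
    linarith [dist_triangle x (g a) p, dist_triangle_left (g a) p (g a₀)]
  by_contra! hfar
  obtain ⟨D, hD⟩ := hΩ.subset_closedBall p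
  obtain ⟨h, hah, hR⟩ := hN a₀ a hfar (⌈K * (D + K + 1)⌉₊ + 1)
  have hchain : Relation.ReflTransGen (fun y z => dist y z ≤ 2 * K ∧ r + 2 * K < dist y p)
      x (g h) := by
    refine .head ⟨by linarith, ?_⟩ (hah.lift g fun b c hbc => ⟨?_, ?_⟩)
    · linarith [far a (hρN.trans hfar), dist_triangle_left (g a) p x]
    · have hbc₁ : (wordDist S b c : ℝ) ≤ 1 := by exact_mod_cast hbc.1
      nlinarith [hg.dist_le b c]
    · linarith [far b hbc.2.1]
  have hh := hg.lt_dist_of_lt_wordDist ha₀ (Nat.lt_of_ceil_lt hR)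
  linarith [mem_closedBall.mp (hD (hgeo.mem_of_reflTransGen hfr hchain hx))]

end IsQuasiIsometryWith

end QuasiIsometry

/-- **Isodiametric control (Lemma 4.5).** If a geodesic metric space `X` is quasi-isometric
to a finitely generated group, then there is a function `f₁ : [0,∞) → [0,∞)` such that every
bounded subset `Ω ⊆ X` satisfies `diam Ω ≤ f₁ (diam (frontier Ω))`. -/
theorem diam_le_of_diam_frontier
    {X : Type*} [MetricSpace X] (hgeo : IsGeodesicSpace X)
    {Γ : Type*} [Group Γ] (S : Set Γ) (hfin : S.Finite) (hgen : Subgroup.closure S = ⊤)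
    (hqi : ∃ (lam C : ℝ) (f : X → Γ), 1 ≤ lam ∧ 0 ≤ C ∧
      (∀ x x' : X, lam⁻¹ * dist x x' - C ≤ (wordDist S (f x) (f x') : ℝ) ∧
        (wordDist S (f x) (f x') : ℝ) ≤ lam * dist x x' + C) ∧
      (∀ g : Γ, ∃ x : X, (wordDist S (f x) g : ℝ) ≤ C)) :
    ∃ f₁ : ℝ → ℝ, (∀ r : ℝ, 0 ≤ r → 0 ≤ f₁ r) ∧
      ∀ Ω : Set X, Bornology.IsBounded Ω →
        Metric.diam Ω ≤ f₁ (Metric.diam (frontier Ω)) := by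
  obtain ⟨lam, C, f, hlam, hC, hf, hsurj⟩ := hqi
  obtain ⟨K, g, hg⟩ := exists_isQuasiIsometryWith hgen hlam hC hf hsurj
  have : Nonempty X := ⟨g 1⟩
  choose B hB0 hB using hg.exists_dist_le_of_frontier_subset_closedBall hgeo hfin hgen
  refine ⟨fun r => 2 * B r, fun r _ => by linarith [hB0 r], fun Ω hΩ => ?_⟩
  obtain ⟨p, hp⟩ := (hΩ.closure.subset frontier_subset_closure).exists_subset_closedBall_diam
  refine diam_le_of_forall_dist_le (by linarith [hB0 (diam (frontier Ω))]) fun x hx y hy => ?_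
  linarith [dist_triangle_right x y p, hB _ Ω p hΩ hp x hx, hB _ Ω p hΩ hp y hy]
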